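/- arXiv:2505.00360 — 3 statements merged into one kernel-verified Lean document; each statement's English description precedes it below -/
import Mathlib

section
/- Let n ≥ 2 and let F(λ) = σ_n(λ)/σ_{n-2}(λ) be defined on the open positive cone {λ ∈ ℝ^n : λ_i > 0 for all i}. Then for every λ in the positive cone and every index i, the partial derivative satisfies ∂F/∂λ_i(λ) = (F(λ)²/λ_i²)·∑_{k ≠ i} 1/λ_k. -/
open Finset

/-- The k-th elementary symmetric polynomial of `lam : Fin n → ℝ`. -/
noncomputable def esig (n k : ℕ) (lam : Fin n → ℝ) : ℝ :=
  ∑ s ∈ Finset.powersetCard k (Finset.univ : Finset (Fin n)), ∏ j ∈ s, lam j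

/-- The quotient operator `F = σ_n / σ_{n-2}`. -/
noncomputable def Fquot (n : ℕ) (lam : Fin n → ℝ) : ℝ :=
  esig n n lam / esig n (n - 2) lam

noncomputable def esum {n : ℕ} (s : Finset (Fin n)) (k : ℕ) (f : Fin n → ℝ) : ℝ :=
  ∑ t ∈ Finset.powersetCard k s, ∏ j ∈ t, f j

lemma esum_update {n : ℕ} {s : Finset (Fin n)} {i : Fin n} (hi : i ∉ s) (k : ℕ)
    (f : Fin n → ℝ) (x : ℝ) : esum s k (Function.update f i x) = esum s k f := by
  unfold esum
  refine Finset.sum_congr rfl fun t ht => Finset.prod_congr rfl fun j hj => ?_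
  have hji : j ≠ i := fun h => hi ((Finset.mem_powersetCard.1 ht).1 (h ▸ hj))
  simp [Function.update_of_ne hji]

lemma esum_insert {n : ℕ} {s : Finset (Fin n)} {i : Fin n} (hi : i ∉ s) (k : ℕ)
    (f : Fin n → ℝ) :
    esum (insert i s) (k + 1) f = esum s (k + 1) f + f i * esum s k f := by
  unfold esum
  rw [Finset.powersetCard_succ_insert hi, Finset.sum_union, Finset.sum_image, Finset.mul_sum]
  · congr 1
    refine Finset.sum_congr rfl fun t ht => ?_
    have hit : i ∉ t := fun h => hi ((Finset.mem_powersetCard.1 ht).1 h)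
    rw [Finset.prod_insert hit]
  · intro a ha b hb hab
    have hia : i ∉ a := fun h => hi ((Finset.mem_powersetCard.1 ha).1 h)
    have hib : i ∉ b := fun h => hi ((Finset.mem_powersetCard.1 hb).1 h)
    rw [← Finset.erase_insert hia, ← Finset.erase_insert hib, hab]
  · rw [Finset.disjoint_right]
    rintro t ht ht'
    obtain ⟨a, _, rfl⟩ := Finset.mem_image.1 ht
    exact hi ((Finset.mem_powersetCard.1 ht').1 (Finset.mem_insert_self i a))

lemma powersetCard_card_sub_one {n : ℕ} (s : Finset (Fin n)) (hs : s.Nonempty) :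
    Finset.powersetCard (s.card - 1) s = s.image (fun k => s.erase k) := by
  ext t
  simp only [Finset.mem_powersetCard, Finset.mem_image]
  constructor
  · rintro ⟨hsub, hcard⟩
    have hc1 : 1 ≤ s.card := Finset.card_pos.2 hs
    have hdcard : (s \ t).card = 1 := by rw [Finset.card_sdiff_of_subset hsub, hcard]; omega
    obtain ⟨m, hm⟩ := Finset.card_eq_one.1 hdcard
    have hmmem : m ∈ s \ t := hm ▸ Finset.mem_singleton_self m
    obtain ⟨hms, hmt⟩ := Finset.mem_sdiff.1 hmmem
    refine ⟨m, hms, ?_⟩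
    have hsub2 : t ⊆ s.erase m := fun x hx =>
      Finset.mem_erase.2 ⟨fun h => hmt (h ▸ hx), hsub hx⟩
    exact (Finset.eq_of_subset_of_card_le hsub2
      (by rw [Finset.card_erase_of_mem hms, hcard])).symm
  · rintro ⟨k, hk, rfl⟩
    exact ⟨Finset.erase_subset _ _, Finset.card_erase_of_mem hk⟩

lemma esum_card_sub_one {n : ℕ} (s : Finset (Fin n)) (hs : s.Nonempty) (f : Fin n → ℝ) :
    esum s (s.card - 1) f = ∑ k ∈ s, ∏ j ∈ s.erase k, f j := by
  unfold esum
  rw [powersetCard_card_sub_one s hs, Finset.sum_image]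
  intro a ha b hb hab
  by_contra hne
  have hmem : a ∈ s.erase b := Finset.mem_erase.2 ⟨hne, ha⟩
  rw [show s.erase b = s.erase a from hab.symm] at hmem
  exact Finset.notMem_erase a s hmem

lemma esig_eq_esum (n k : ℕ) (f : Fin n → ℝ) : esig n k f = esum Finset.univ k f := rfl

/-- The partial derivative of `F = σ_n/σ_{n-2}` in the `i`-th coordinate,
at a point of the positive cone, equals `(F(λ)²/λ_i²)·∑_{k ≠ i} 1/λ_k`. -/
theorem stmt_7 (n : ℕ) (hn : 2 ≤ n) (lam : Fin n → ℝ) (hpos : ∀ i, 0 < lam i) (i : Fin n) :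
    HasDerivAt (fun t : ℝ => Fquot n (Function.update lam i t))
      ((Fquot n lam) ^ 2 / (lam i) ^ 2 * ∑ k ∈ Finset.univ.erase i, 1 / lam k)
      (lam i) := by
  classical
  set s : Finset (Fin n) := Finset.univ.erase i with hsdef
  have hi : i ∉ s := Finset.notMem_erase i _
  have huniv : (Finset.univ : Finset (Fin n)) = insert i s :=
    (Finset.insert_erase (Finset.mem_univ i)).symm
  have hcard : s.card = n - 1 := by
    rw [hsdef, Finset.card_erase_of_mem (Finset.mem_univ i), Finset.card_univ, Fintype.card_fin]
  have hsne : s.Nonempty := Finset.card_pos.1 (by omega)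
  set P : ℝ := ∏ j ∈ s, lam j with hPdef
  set A : ℝ := esum s (n - 2) lam with hAdef
  set B : ℝ := if n = 2 then 0 else esum s (n - 3) lam with hBdef
  have hP : 0 < P := Finset.prod_pos fun j _ => hpos j
  -- σ_n formula
  have hσn : ∀ t : ℝ, esig n n (Function.update lam i t) = t * P := by
    intro t
    obtain ⟨m, rfl⟩ : ∃ m, n = m + 1 := ⟨n - 1, by omega⟩
    rw [esig_eq_esum, huniv, esum_insert hi m]
    have h0 : esum s (m + 1) (Function.update lam i t) = 0 := by
      unfold esum
      rw [Finset.powersetCard_eq_empty.2 (by omega), Finset.sum_empty]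
    have h1 : esum s m (Function.update lam i t) = P := by
      rw [esum_update hi]
      unfold esum
      have hm : s.card = m := by omega
      have hps := Finset.powersetCard_self s
      rw [hm] at hps
      rw [hps, Finset.sum_singleton]
    rw [h0, h1, Function.update_self, zero_add]
  -- σ_{n-2} formula
  have hσ2 : ∀ t : ℝ, esig n (n - 2) (Function.update lam i t) = A + t * B := by
    intro t
    rcases eq_or_lt_of_le hn with h2 | h3
    · have hB0 : B = 0 := by rw [hBdef, if_pos h2.symm]
      rw [hB0, mul_zero, add_zero, esig_eq_esum, hAdef, show n - 2 = 0 by omega]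
      unfold esum
      simp [Finset.powersetCard_zero]
    · have hne2 : n ≠ 2 := by omega
      rw [esig_eq_esum, huniv, show n - 2 = (n - 3) + 1 by omega, esum_insert hi,
        esum_update hi, esum_update hi, Function.update_self, hBdef, if_neg hne2,
        hAdef, show (n - 3) + 1 = n - 2 by omega]
  -- A in terms of P
  have hA : A = P * ∑ k ∈ s, 1 / lam k := by
    rw [hAdef, show n - 2 = s.card - 1 by omega, esum_card_sub_one s hsne, Finset.mul_sum]
    refine Finset.sum_congr rfl fun k hk => ?_
    have hlk : lam k ≠ 0 := (hpos k).ne'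
    have := Finset.prod_erase_mul s lam hk
    field_simp
    linarith [this]
  have hBnn : 0 ≤ B := by
    rw [hBdef]
    split
    · exact le_refl 0
    · unfold esum
      exact Finset.sum_nonneg fun t _ => Finset.prod_nonneg fun j _ => (hpos j).le
  have hsum : 0 < ∑ k ∈ s, 1 / lam k :=
    Finset.sum_pos (fun k _ => one_div_pos.2 (hpos k)) hsne
  have hD : 0 < A + lam i * B := by
    have : 0 < A := by rw [hA]; positivity
    nlinarith [hpos i]
  have hDne : A + lam i * B ≠ 0 := hD.ne'
  have hFq : ∀ t : ℝ, Fquot n (Function.update lam i t) = t * P / (A + t * B) := by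
    intro t
    rw [Fquot, hσn, hσ2]
  have hfun : (fun t : ℝ => Fquot n (Function.update lam i t))
      = fun t : ℝ => t * P / (A + t * B) := funext hFq
  have h1 : HasDerivAt (fun t : ℝ => t * P) P (lam i) := by
    simpa using (hasDerivAt_id (lam i)).mul_const P
  have h2 : HasDerivAt (fun t : ℝ => A + t * B) B (lam i) := by
    simpa using ((hasDerivAt_id (lam i)).mul_const B).const_add A
  have h3 := h1.div h2 hDne
  have hFlam : Fquot n lam = lam i * P / (A + lam i * B) := by
    have := hFq (lam i)
    rwa [Function.update_eq_self] at this
  have hli : lam i ≠ 0 := (hpos i).ne'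
  have heq : (Fquot n lam) ^ 2 / (lam i) ^ 2 * ∑ k ∈ s, 1 / lam k
      = (P * (A + lam i * B) - lam i * P * B) / (A + lam i * B) ^ 2 := by
    have hsumeq : ∑ k ∈ s, 1 / lam k = A / P := by
      rw [hA]; field_simp
    rw [hFlam, hsumeq]
    field_simp
    ring
  rw [hfun, heq]
  exact h3
end

section
/- Let n ≥ 2, let 1 ≤ k < n, and let F(λ) = σ_n(λ)/σ_k(λ) on the open positive cone in ℝ^n. Then for every λ in the positive cone and all indices p ≠ q with λ_p ≠ λ_q, the divided difference of the first partial derivatives is strictly positive: (∂F/∂λ_p(λ) − ∂F/∂λ_q(λ))/(λ_q − λ_p) > 0. -/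
/-- The partial derivative of `F = σ_n/σ_k` in the `p`-th coordinate at `lam`. -/
noncomputable def partialF (n k : ℕ) (p : Fin n) (lam : Fin n → ℝ) : ℝ :=
  deriv (fun t : ℝ => esig n n (Function.update lam p t) / esig n k (Function.update lam p t))
    (lam p)

/-- Elementary symmetric sum of `lam` over a finset `s`. -/
noncomputable def Esym {n : ℕ} (lam : Fin n → ℝ) (s : Finset (Fin n)) (m : ℕ) : ℝ :=
  ∑ t ∈ Finset.powersetCard m s, ∏ j ∈ t, lam j

lemma esig_eq_Esym (n r : ℕ) (lam : Fin n → ℝ) : esig n r lam = Esym lam Finset.univ r := rfl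

lemma Esym_nonneg {n : ℕ} {lam : Fin n → ℝ} (hpos : ∀ i, 0 < lam i) (s : Finset (Fin n)) (m : ℕ) :
    0 ≤ Esym lam s m :=
  Finset.sum_nonneg fun u _ => Finset.prod_nonneg fun j _ => (hpos j).le

lemma Esym_pos {n : ℕ} {lam : Fin n → ℝ} (hpos : ∀ i, 0 < lam i) {s : Finset (Fin n)} {m : ℕ}
    (hm : m ≤ s.card) : 0 < Esym lam s m := by
  obtain ⟨t, ht⟩ := Finset.powersetCard_nonempty.2 hm
  exact Finset.sum_pos' (fun u _ => Finset.prod_nonneg fun j _ => (hpos j).le)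
    ⟨t, ht, Finset.prod_pos fun j _ => hpos j⟩

lemma Esym_insert {n : ℕ} (lam : Fin n → ℝ) {s : Finset (Fin n)} {p : Fin n} (hp : p ∉ s)
    (m : ℕ) :
    Esym lam (insert p s) (m + 1) = Esym lam s (m + 1) + lam p * Esym lam s m := by
  unfold Esym
  rw [Finset.powersetCard_succ_insert hp, Finset.sum_union, Finset.sum_image, Finset.mul_sum]
  · congr 1
    refine Finset.sum_congr rfl fun t ht => ?_
    have hpt : p ∉ t := fun h => hp ((Finset.mem_powersetCard.mp ht).1 h)
    rw [Finset.prod_insert hpt]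
  · intro a ha b hb hab
    have hpa : p ∉ a := fun h => hp ((Finset.mem_powersetCard.mp ha).1 h)
    have hpb : p ∉ b := fun h => hp ((Finset.mem_powersetCard.mp hb).1 h)
    rw [← Finset.erase_insert hpa, ← Finset.erase_insert hpb, hab]
  · rw [Finset.disjoint_left]
    intro a ha hb
    obtain ⟨t, ht, rfl⟩ := Finset.mem_image.mp hb
    have hpt : p ∉ t := fun h => hp ((Finset.mem_powersetCard.mp ht).1 h)
    exact hp ((Finset.mem_powersetCard.mp ha).1 (Finset.mem_insert_self p t))

lemma Esym_split {n : ℕ} (lam : Fin n → ℝ) {s : Finset (Fin n)} {p : Fin n} (hp : p ∈ s)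
    (m : ℕ) :
    Esym lam s (m + 1) = Esym lam (s.erase p) (m + 1) + lam p * Esym lam (s.erase p) m := by
  conv_lhs => rw [← Finset.insert_erase hp]
  exact Esym_insert lam (Finset.notMem_erase p s) m

lemma Esym_update {n : ℕ} (lam : Fin n → ℝ) {s : Finset (Fin n)} {p : Fin n} (hp : p ∉ s)
    (x : ℝ) (m : ℕ) :
    Esym (Function.update lam p x) s m = Esym lam s m := by
  refine Finset.sum_congr rfl fun t ht => Finset.prod_congr rfl fun j hj => ?_
  have : j ≠ p := fun h => hp (h ▸ (Finset.mem_powersetCard.mp ht).1 hj)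
  exact Function.update_of_ne this x lam

lemma esig_update_eq (m r : ℕ) (lam : Fin (m + 1) → ℝ) (p : Fin (m + 1)) (t : ℝ) :
    esig (m + 1) (r + 1) (Function.update lam p t)
      = Esym lam (Finset.univ.erase p) (r + 1) + t * Esym lam (Finset.univ.erase p) r := by
  rw [esig_eq_Esym, Esym_split _ (Finset.mem_univ p),
    Esym_update lam (Finset.notMem_erase p _), Esym_update lam (Finset.notMem_erase p _),
    Function.update_self]

lemma card_univ_erase {m : ℕ} (p : Fin (m + 1)) :
    (Finset.univ.erase p : Finset (Fin (m + 1))).card = m := by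
  rw [Finset.card_erase_of_mem (Finset.mem_univ p), Finset.card_univ, Fintype.card_fin]
  omega

lemma partialF_formula (m j : ℕ) (hj : j ≤ m) (lam : Fin (m + 1) → ℝ)
    (hpos : ∀ i, 0 < lam i) (p : Fin (m + 1)) :
    partialF (m + 1) (j + 1) p lam =
      (Esym lam (Finset.univ.erase p) m * esig (m + 1) (j + 1) lam
        - Esym lam (Finset.univ.erase p) j * esig (m + 1) (m + 1) lam)
        / (esig (m + 1) (j + 1) lam) ^ 2 := by
  set An := Esym lam (Finset.univ.erase p) (m + 1) with hAn
  set Bn := Esym lam (Finset.univ.erase p) m with hBn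
  set Ak := Esym lam (Finset.univ.erase p) (j + 1) with hAk
  set Bk := Esym lam (Finset.univ.erase p) j with hBk
  have hSk : esig (m + 1) (j + 1) lam = Ak + lam p * Bk := by
    rw [esig_eq_Esym]; exact Esym_split lam (Finset.mem_univ p) j
  have hSn : esig (m + 1) (m + 1) lam = An + lam p * Bn := by
    rw [esig_eq_Esym]; exact Esym_split lam (Finset.mem_univ p) m
  have hkpos : 0 < esig (m + 1) (j + 1) lam := by
    rw [esig_eq_Esym]
    exact Esym_pos hpos (by rw [Finset.card_univ, Fintype.card_fin]; omega)
  have hne : Ak + lam p * Bk ≠ 0 := by rw [← hSk]; exact hkpos.ne'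
  have hfun : (fun t : ℝ => esig (m + 1) (m + 1) (Function.update lam p t) /
      esig (m + 1) (j + 1) (Function.update lam p t))
      = fun t : ℝ => (An + t * Bn) / (Ak + t * Bk) := by
    funext t; rw [esig_update_eq, esig_update_eq]
  have h1 : HasDerivAt (fun t : ℝ => An + t * Bn) Bn (lam p) := by
    simpa using ((hasDerivAt_id (lam p)).mul_const Bn).const_add An
  have h2 : HasDerivAt (fun t : ℝ => Ak + t * Bk) Bk (lam p) := by
    simpa using ((hasDerivAt_id (lam p)).mul_const Bk).const_add Ak
  have hd : HasDerivAt (fun t : ℝ => (An + t * Bn) / (Ak + t * Bk)) _ (lam p) :=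
    h1.div h2 hne
  rw [partialF, hfun, hd.deriv, ← hSk, ← hSn]
  ring

lemma Esym_zero {n : ℕ} (lam : Fin n → ℝ) (s : Finset (Fin n)) : Esym lam s 0 = 1 := by
  unfold Esym
  rw [Finset.powersetCard_zero, Finset.sum_singleton, Finset.prod_empty]

lemma Esym_card {n : ℕ} (lam : Fin n → ℝ) (s : Finset (Fin n)) :
    Esym lam s s.card = ∏ j ∈ s, lam j := by
  unfold Esym
  rw [Finset.powersetCard_self, Finset.sum_singleton]

/-- For `F = σ_n/σ_k` on the positive cone, and indices `p ≠ q` with `λ_p ≠ λ_q`,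
the divided difference `(∂F/∂λ_p − ∂F/∂λ_q)/(λ_q − λ_p)` is strictly positive. -/
theorem stmt_11 (n k : ℕ) (hn : 2 ≤ n) (hk1 : 1 ≤ k) (hkn : k < n)
    (lam : Fin n → ℝ) (hpos : ∀ i, 0 < lam i) (p q : Fin n) (hpq : p ≠ q)
    (hval : lam p ≠ lam q) :
    0 < (partialF n k p lam - partialF n k q lam) / (lam q - lam p) := by
  obtain ⟨N, rfl⟩ : ∃ N, n = N + 2 := ⟨n - 2, by omega⟩
  obtain ⟨j, rfl⟩ : ∃ j, k = j + 1 := ⟨k - 1, by omega⟩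
  have hjN : j ≤ N + 1 := by omega
  have hqp : q ≠ p := Ne.symm hpq
  have hqmem : q ∈ (Finset.univ : Finset (Fin (N + 2))).erase p :=
    Finset.mem_erase.2 ⟨hqp, Finset.mem_univ q⟩
  have hpmem : p ∈ (Finset.univ : Finset (Fin (N + 2))).erase q :=
    Finset.mem_erase.2 ⟨hpq, Finset.mem_univ p⟩
  set D := ((Finset.univ : Finset (Fin (N + 2))).erase p).erase q with hD
  have hD' : ((Finset.univ : Finset (Fin (N + 2))).erase q).erase p = D :=
    Finset.erase_right_comm
  have hcardD : D.card = N := by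
    rw [hD, Finset.card_erase_of_mem hqmem, card_univ_erase]
    omega
  set A := Esym lam D N with hA
  have hApos : 0 < A := Esym_pos hpos (by omega)
  set Sk := esig (N + 2) (j + 1) lam with hSkdef
  set Sn := esig (N + 2) (N + 2) lam with hSndef
  have hkpos : 0 < Sk := by
    rw [hSkdef, esig_eq_Esym]
    exact Esym_pos hpos (by rw [Finset.card_univ, Fintype.card_fin]; omega)
  have hSnA : Sn = lam p * lam q * A := by
    have h1 : Sn = ∏ i ∈ (Finset.univ : Finset (Fin (N + 2))), lam i := by
      rw [hSndef, esig_eq_Esym]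
      have := Esym_card lam (Finset.univ : Finset (Fin (N + 2)))
      rwa [Finset.card_univ, Fintype.card_fin] at this
    have h2 : A = ∏ i ∈ D, lam i := by
      have h := Esym_card lam D
      rw [hcardD] at h
      rw [hA]; exact h
    rw [h1, h2, ← Finset.mul_prod_erase _ _ (Finset.mem_univ p),
      ← Finset.mul_prod_erase _ _ hqmem, hD, mul_assoc]
  have hBn : Esym lam (Finset.univ.erase p) (N + 1) - Esym lam (Finset.univ.erase q) (N + 1)
      = (lam q - lam p) * A := by
    rw [Esym_split lam hqmem N, Esym_split lam hpmem N, hD']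
    rw [← hD, ← hA]; ring
  have hfin : ∀ c : ℝ,
      Esym lam (Finset.univ.erase p) j - Esym lam (Finset.univ.erase q) j
        = (lam q - lam p) * c →
      0 < A * Sk - c * Sn →
      0 < (partialF (N + 2) (j + 1) p lam - partialF (N + 2) (j + 1) q lam)
        / (lam q - lam p) := by
    intro c hBk hnum
    have hx : lam q - lam p ≠ 0 := sub_ne_zero.mpr (Ne.symm hval)
    rw [partialF_formula (N + 1) j hjN lam hpos p, partialF_formula (N + 1) j hjN lam hpos q,
      ← hSkdef, ← hSndef]
    rw [div_sub_div_same, div_div]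
    have hnumeq : Esym lam (Finset.univ.erase p) (N + 1) * Sk
        - Esym lam (Finset.univ.erase p) j * Sn
        - (Esym lam (Finset.univ.erase q) (N + 1) * Sk
          - Esym lam (Finset.univ.erase q) j * Sn)
        = (lam q - lam p) * (A * Sk - c * Sn) := by
      linear_combination Sk * hBn - Sn * hBk
    rw [hnumeq, mul_comm (Sk ^ 2) (lam q - lam p),
      mul_div_mul_left _ _ hx]
    exact div_pos hnum (pow_pos hkpos 2)
  rcases j with _ | i
  · refine hfin 0 ?_ ?_
    · rw [Esym_zero, Esym_zero]; ring
    · have : (0 : ℝ) * Sn = 0 := by ring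
      rw [this, sub_zero]
      exact mul_pos hApos hkpos
  · refine hfin (Esym lam D i) ?_ ?_
    · rw [Esym_split lam hqmem i, Esym_split lam hpmem i, hD', ← hD]; ring
    · have hiN : i + 1 ≤ N := by omega
      have hSk' : Sk = Esym lam D (i + 2) + lam q * Esym lam D (i + 1)
          + lam p * (Esym lam D (i + 1) + lam q * Esym lam D i) := by
        rw [hSkdef, esig_eq_Esym, Esym_split lam (Finset.mem_univ p) (i + 1),
          Esym_split lam hqmem (i + 1), Esym_split lam hqmem i, ← hD]
      have h1 : 0 < Esym lam D (i + 1) := Esym_pos hpos (by omega)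
      have h2 : 0 ≤ Esym lam D (i + 2) := Esym_nonneg hpos D (i + 2)
      have key : A * Sk - Esym lam D i * Sn
          = A * (Esym lam D (i + 2) + (lam p + lam q) * Esym lam D (i + 1)) := by
        rw [hSk', hSnA]; ring
      rw [key]
      have hpq' : 0 < (lam p + lam q) * Esym lam D (i + 1) :=
        mul_pos (add_pos (hpos p) (hpos q)) h1
      exact mul_pos hApos (by linarith)
end

section
/- Let n ≥ 3 and let F(λ) = σ_n(λ)/σ_{n-2}(λ). There exists a constant C(n) > 0 depending only on n such that for every λ ∈ ℝ^n with λ_1 ≥ λ_2 ≥ ⋯ ≥ λ_n > 0, ∑_{i=1}^{n-1} 1/λ_i ≤ λ_n/F(λ) ≤ C(n)·∑_{i=1}^{n-1} 1/λ_i. -/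
/-- There is `C = C(n) > 0` such that for every decreasingly ordered positive
`λ ∈ ℝⁿ`, `∑_{i=1}^{n-1} 1/λ_i ≤ λ_n/F(λ) ≤ C·∑_{i=1}^{n-1} 1/λ_i`. -/
theorem stmt_19 (n : ℕ) (hn : 3 ≤ n) :
    ∃ C : ℝ, 0 < C ∧ ∀ lam : Fin n → ℝ,
      (∀ i j : Fin n, i ≤ j → lam j ≤ lam i) → (∀ i, 0 < lam i) →
      (∑ i ∈ Finset.univ.filter (fun i : Fin n => (i : ℕ) < n - 1), 1 / lam i) ≤
        lam ⟨n - 1, by omega⟩ / Fquot n lam ∧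
      lam ⟨n - 1, by omega⟩ / Fquot n lam ≤
        C * ∑ i ∈ Finset.univ.filter (fun i : Fin n => (i : ℕ) < n - 1), 1 / lam i := by
  classical
  refine ⟨(n : ℝ) ^ 2, by positivity, fun lam hmono hpos => ?_⟩
  set m : Fin n := ⟨n - 1, by omega⟩ with hm
  set S := ∑ i ∈ Finset.univ.filter (fun i : Fin n => (i : ℕ) < n - 1), 1 / lam i with hS
  have hmval : (m : ℕ) = n - 1 := rfl
  have hml : ∀ k : Fin n, lam m ≤ lam k := by
    intro k
    refine hmono k m ?_
    have hk := k.isLt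
    simp only [Fin.le_def, hmval]
    omega
  have hne : ∀ i : Fin n, i ≠ m → (i : ℕ) < n - 1 := by
    intro i hi
    have h1 := i.isLt
    rcases Nat.lt_or_ge (i : ℕ) (n - 1) with h | h
    · exact h
    · exact absurd (Fin.ext (by omega)) hi
  have hSle : ∀ i : Fin n, i ≠ m → (lam i)⁻¹ ≤ S := by
    intro i hi
    have hiS : i ∈ Finset.univ.filter (fun i : Fin n => (i : ℕ) < n - 1) := by
      simp [hne i hi]
    calc (lam i)⁻¹ = 1 / lam i := (one_div _).symm
      _ ≤ S := Finset.single_le_sum (f := fun i => 1 / lam i)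
          (fun j _ => by have := hpos j; positivity) hiS
  have hSpos : 0 < S := by
    refine Finset.sum_pos (fun j _ => by have := hpos j; positivity) ?_
    refine ⟨⟨0, by omega⟩, ?_⟩
    simp only [Finset.mem_filter, Finset.mem_univ, true_and]
    omega
  have hPpos : 0 < ∏ j, lam j := Finset.prod_pos fun i _ => hpos i
  have hen : esig n n lam = ∏ j, lam j := by
    have hps : Finset.powersetCard n (Finset.univ : Finset (Fin n)) = {Finset.univ} := by
      simpa using Finset.powersetCard_self (Finset.univ : Finset (Fin n))
    rw [esig, hps, Finset.sum_singleton]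
  have hσ : esig n (n - 2) lam =
      ∑ t ∈ Finset.powersetCard 2 (Finset.univ : Finset (Fin n)), ∏ j ∈ tᶜ, lam j := by
    rw [esig]
    refine Finset.sum_nbij' (fun s => sᶜ) (fun t => tᶜ) ?_ ?_ ?_ ?_ ?_
    · intro s hs
      rw [Finset.mem_powersetCard_univ] at hs ⊢
      rw [Finset.card_compl, Fintype.card_fin, hs]
      omega
    · intro t ht
      rw [Finset.mem_powersetCard_univ] at ht ⊢
      rw [Finset.card_compl, Fintype.card_fin, ht]
    · intro s _; exact compl_compl s
    · intro t _; exact compl_compl t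
    · intro s _; rw [compl_compl]
  have hσpos : 0 < esig n (n - 2) lam := by
    rw [esig]
    refine Finset.sum_pos (fun s _ => Finset.prod_pos fun j _ => hpos j) ?_
    refine Finset.powersetCard_nonempty.mpr ?_
    simp only [Finset.card_univ, Fintype.card_fin]
    omega
  have hkey : lam m / Fquot n lam =
      ∑ t ∈ Finset.powersetCard 2 (Finset.univ : Finset (Fin n)),
        lam m * ∏ j ∈ t, (lam j)⁻¹ := by
    rw [Fquot, hen, div_div_eq_mul_div, hσ, Finset.mul_sum, Finset.sum_div]
    refine Finset.sum_congr rfl fun t _ => ?_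
    have h1 : (0 : ℝ) < ∏ j ∈ t, lam j := Finset.prod_pos fun j _ => hpos j
    have h2 : (0 : ℝ) < ∏ j ∈ tᶜ, lam j := Finset.prod_pos fun j _ => hpos j
    rw [← Finset.prod_mul_prod_compl t lam, Finset.prod_inv_distrib]
    rw [div_eq_iff (by positivity)]
    field_simp
  have hnem : ∀ i : Fin n, (i : ℕ) < n - 1 → i ≠ m := by
    intro i hi h
    rw [h, hmval] at hi
    omega
  constructor
  · -- lower bound
    rw [hkey]
    have hinj : ∀ x ∈ Finset.univ.filter (fun i : Fin n => (i : ℕ) < n - 1),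
        ∀ y ∈ Finset.univ.filter (fun i : Fin n => (i : ℕ) < n - 1),
        ({x, m} : Finset (Fin n)) = {y, m} → x = y := by
      intro a ha b hb hab
      simp only [Finset.mem_filter, Finset.mem_univ, true_and] at ha hb
      have ham : a ≠ m := hnem a ha
      have : a ∈ ({b, m} : Finset (Fin n)) := by rw [← hab]; simp
      simp only [Finset.mem_insert, Finset.mem_singleton] at this
      rcases this with h | h
      · exact h
      · exact absurd h ham
    have hSeq : S = ∑ t ∈ (Finset.univ.filter (fun i : Fin n => (i : ℕ) < n - 1)).image
        (fun i => ({i, m} : Finset (Fin n))), lam m * ∏ j ∈ t, (lam j)⁻¹ := by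
      rw [Finset.sum_image hinj, hS]
      refine Finset.sum_congr rfl fun i hi => ?_
      simp only [Finset.mem_filter, Finset.mem_univ, true_and] at hi
      have him : i ≠ m := hnem i hi
      rw [Finset.prod_pair him]
      have := hpos i; have := hpos m
      field_simp
    rw [hSeq]
    refine Finset.sum_le_sum_of_subset_of_nonneg ?_ ?_
    · intro t ht
      simp only [Finset.mem_image] at ht
      obtain ⟨i, hi, rfl⟩ := ht
      simp only [Finset.mem_filter, Finset.mem_univ, true_and] at hi
      have him : i ≠ m := hnem i hi
      rw [Finset.mem_powersetCard_univ, Finset.card_insert_of_notMem (by simp [him]),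
        Finset.card_singleton]
    · intro t _ _
      have h1 : (0 : ℝ) < ∏ j ∈ t, (lam j)⁻¹ :=
        Finset.prod_pos fun j _ => inv_pos.mpr (hpos j)
      have := hpos m
      positivity
  · -- upper bound
    rw [hkey]
    have hb : ∀ t ∈ Finset.powersetCard 2 (Finset.univ : Finset (Fin n)),
        lam m * ∏ j ∈ t, (lam j)⁻¹ ≤ S := by
      intro t ht
      obtain ⟨i, j, hij, rfl⟩ := Finset.card_eq_two.mp (Finset.mem_powersetCard_univ.mp ht)
      rw [Finset.prod_pair hij]
      rcases eq_or_ne j m with hjm | hjm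
      · subst hjm
        have him : i ≠ m := hij
        have heq : lam m * ((lam i)⁻¹ * (lam m)⁻¹) = (lam i)⁻¹ := by
          have := hpos i; have := hpos m
          field_simp
        rw [heq]
        exact hSle i him
      · have h1 : lam m * (lam i)⁻¹ ≤ 1 := by
          rw [← div_eq_mul_inv]
          exact div_le_one_of_le₀ (hml i) (hpos i).le
        calc lam m * ((lam i)⁻¹ * (lam j)⁻¹) = lam m * (lam i)⁻¹ * (lam j)⁻¹ := by ring
          _ ≤ 1 * (lam j)⁻¹ :=
            mul_le_mul_of_nonneg_right h1 (inv_pos.mpr (hpos j)).le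
          _ = (lam j)⁻¹ := one_mul _
          _ ≤ S := hSle j hjm
    calc ∑ t ∈ Finset.powersetCard 2 (Finset.univ : Finset (Fin n)),
          lam m * ∏ j ∈ t, (lam j)⁻¹
        ≤ (Finset.powersetCard 2 (Finset.univ : Finset (Fin n))).card • S :=
          Finset.sum_le_card_nsmul _ _ _ hb
      _ = ((n.choose 2 : ℕ) : ℝ) * S := by
          rw [Finset.card_powersetCard, Finset.card_univ, Fintype.card_fin, nsmul_eq_mul]
      _ ≤ (n : ℝ) ^ 2 * S := by
          refine mul_le_mul_of_nonneg_right ?_ hSpos.le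
          have hch : n.choose 2 ≤ n ^ 2 := by
            calc n.choose 2 = n * (n - 1) / 2 := Nat.choose_two_right n
              _ ≤ n * (n - 1) := Nat.div_le_self _ _
              _ ≤ n * n := Nat.mul_le_mul_left _ (Nat.sub_le _ _)
              _ = n ^ 2 := (sq n).symm
          calc ((n.choose 2 : ℕ) : ℝ) ≤ ((n ^ 2 : ℕ) : ℝ) := Nat.cast_le.mpr hch
            _ = (n : ℝ) ^ 2 := by push_cast; ring
end
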